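/- Let N be a positive integer, r a nonzero rational number, L = (1+rq)^{1/N} ∈ ℚ[[q]] the binomial series, X = 1 − L^{−N}, and let D_L = zD + L acting ℚ[z]-linearly on ℚ[[q]][z] (with D = q·d/dq extended z-linearly and L acting by multiplication). For every n ≥ 0 there exist polynomials c^{(n)}_{m,j} ∈ ℚ[x] for 0 ≤ j ≤ m ≤ n such that D_L^n = Σ_{m=0}^{n} z^m·L^{n−m}·Σ_{j=0}^{m} c^{(n)}_{m,j}(X)·D^{m−j} as operators on ℚ[[q]][z], where c^{(n)}_{m,0} = C(n,m) is the binomial coefficient and, for j ≥ 1, c^{(n)}_{m,j}(x) is divisible by x and has degree at most j. -/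

import Mathlib

/-!
In the ring of ℚ-linear operators on ℚ[[q]][z], multiplication by z commutes with D and with
multiplication by series, while D ∘ f = f ∘ D + D(f). Because D L = (1/N)·X·L and
D X = X(1 − X), the derivative of L^e·c(X) is L^e·(e/N·x·c + x(1 − x)·c')(X), so left
multiplication by D_L = zD + L sends a normal-ordered monomial z^m·L^e·c(X)·D^k to a sum of three
normal-ordered monomials. This gives a Pascal-type recursion for the coefficients, from which the
binomial column j = 0, divisibility by x and the degree bound follow by induction on n.
-/

open PowerSeries Finset

noncomputable section

/-- The derivation D = q·d/dq on ℚ[[q]]. -/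
def Dq (f : PowerSeries ℚ) : PowerSeries ℚ :=
  PowerSeries.mk fun n => (n : ℚ) * PowerSeries.coeff n f

/-- The generalized binomial coefficient C(s,n) = s(s−1)⋯(s−n+1)/n!. -/
def gbinom (s : ℚ) (n : ℕ) : ℚ :=
  (∏ j ∈ range n, (s - (j : ℚ))) / (n.factorial : ℚ)

/-- L^s = (1+rq)^{s/N} = Σ_{n≥0} C(s/N,n)(rq)ⁿ. -/
def Lpow (N : ℕ) (r : ℚ) (s : ℚ) : PowerSeries ℚ :=
  PowerSeries.mk fun n => gbinom (s / (N : ℚ)) n * r ^ n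

/-- X = 1 − L^{−N}. -/
def Xser (N : ℕ) (r : ℚ) : PowerSeries ℚ := 1 - Lpow N r (-(N : ℚ))

/-- The z-linear extension of D to ℚ[[q]][z], applying D to each coefficient. -/
def Dz (p : Polynomial (PowerSeries ℚ)) : Polynomial (PowerSeries ℚ) :=
  p.sum fun i c => Polynomial.monomial i (Dq c)

/-- The operator D_L = zD + L on ℚ[[q]][z]. -/
def DL (N : ℕ) (r : ℚ) (p : Polynomial (PowerSeries ℚ)) : Polynomial (PowerSeries ℚ) :=
  Polynomial.X * Dz p + Polynomial.C (Lpow N r 1) * p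

section NormalOrdering

open Polynomial

def twistedDeriv (a : ℚ) (c : ℚ[X]) : ℚ[X] :=
  Polynomial.C a * Polynomial.X * c + (1 - Polynomial.X) * (Polynomial.X * derivative c)

-- `normalOrderCoeff (1 / N) n m j` is the paper's `c^{(n)}_{m,j}`. In the last case the three
-- summands come from `L`, from `zD` acting on `D^{m-j}`, and from `zD` acting on the coefficient.
def normalOrderCoeff (κ : ℚ) : ℕ → ℕ → ℕ → ℚ[X]
  | 0, 0, 0 => 1
  | 0, _, _ => 0
  | n + 1, 0, j => normalOrderCoeff κ n 0 j
  | n + 1, m + 1, 0 => normalOrderCoeff κ n (m + 1) 0 + normalOrderCoeff κ n m 0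
  | n + 1, m + 1, j + 1 => normalOrderCoeff κ n (m + 1) (j + 1) + normalOrderCoeff κ n m (j + 1)
      + twistedDeriv ((n - m : ℕ) * κ) (normalOrderCoeff κ n m j)

lemma natDegree_X_mul_derivative_le (c : ℚ[X]) :
    (Polynomial.X * derivative c).natDegree ≤ c.natDegree := by
  rcases Nat.eq_zero_or_pos c.natDegree with h | h
  · simp [derivative_of_natDegree_zero h]
  · refine natDegree_mul_le.trans ?_
    have := natDegree_derivative_le c
    rw [natDegree_X]
    omega

lemma natDegree_twistedDeriv_le (a : ℚ) (c : ℚ[X]) :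
    (twistedDeriv a c).natDegree ≤ c.natDegree + 1 := by
  have h1 : (1 - Polynomial.X : ℚ[X]).natDegree ≤ 1 :=
    (natDegree_sub_le _ _).trans (by simp)
  refine (natDegree_add_le _ _).trans (max_le ?_ ?_)
  · have := (natDegree_C_mul_le a Polynomial.X).trans natDegree_X_le
    exact natDegree_mul_le.trans (by omega)
  · refine natDegree_mul_le.trans ?_
    have := natDegree_X_mul_derivative_le c
    omega

lemma X_dvd_twistedDeriv (a : ℚ) (c : ℚ[X]) : Polynomial.X ∣ twistedDeriv a c :=
  dvd_add ⟨Polynomial.C a * c, by ring⟩ ⟨(1 - Polynomial.X) * derivative c, by ring⟩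

variable {κ : ℚ}

lemma normalOrderCoeff_eq_zero_of_lt_right {n m j : ℕ} (h : m < j) :
    normalOrderCoeff κ n m j = 0 := by
  induction n generalizing m j with
  | zero => rcases m with _ | m <;> rcases j with _ | j <;> simp_all [normalOrderCoeff]
  | succ n ih =>
    rcases m with _ | m <;> rcases j with _ | j
    · omega
    · exact ih h
    · omega
    · simp [normalOrderCoeff, ih h, ih (Nat.lt_of_succ_lt_succ h), ih (Nat.lt_of_succ_lt h),
        twistedDeriv]

lemma normalOrderCoeff_eq_zero_of_lt {n m j : ℕ} (h : n < m) :
    normalOrderCoeff κ n m j = 0 := by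
  induction n generalizing m j with
  | zero => rcases m with _ | m <;> rcases j with _ | j <;> simp_all [normalOrderCoeff]
  | succ n ih =>
    rcases m with _ | m <;> rcases j with _ | j
    · omega
    · omega
    · simp [normalOrderCoeff, ih (by omega : n < m), ih (by omega : n < m + 1)]
    · simp [normalOrderCoeff, ih (by omega : n < m), ih (by omega : n < m + 1), twistedDeriv]

lemma normalOrderCoeff_zero_right (n m : ℕ) :
    normalOrderCoeff κ n m 0 = Polynomial.C (n.choose m : ℚ) := by
  induction n generalizing m with
  | zero => rcases m with _ | m <;> simp [normalOrderCoeff]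
  | succ n ih =>
    rcases m with _ | m
    · simp [normalOrderCoeff, ih]
    · simp [normalOrderCoeff, ih, Nat.choose_succ_succ, add_comm]

lemma natDegree_normalOrderCoeff_le (n m j : ℕ) :
    (normalOrderCoeff κ n m j).natDegree ≤ j := by
  induction n generalizing m j with
  | zero => rcases m with _ | m <;> rcases j with _ | j <;> simp [normalOrderCoeff]
  | succ n ih =>
    rcases m with _ | m <;> rcases j with _ | j
    · simp [normalOrderCoeff_zero_right]
    · exact ih 0 (j + 1)
    · simp [normalOrderCoeff_zero_right]
    · simp only [normalOrderCoeff]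
      refine (natDegree_add_le _ _).trans (max_le ((natDegree_add_le _ _).trans
        (max_le (ih _ _) (ih _ _))) ?_)
      exact (natDegree_twistedDeriv_le _ _).trans (by simpa using ih m j)

lemma X_dvd_normalOrderCoeff {n m j : ℕ} (hj : j ≠ 0) :
    Polynomial.X ∣ normalOrderCoeff κ n m j := by
  induction n generalizing m j with
  | zero => rcases m with _ | m <;> rcases j with _ | j <;> simp_all [normalOrderCoeff]
  | succ n ih =>
    rcases m with _ | m <;> rcases j with _ | j
    · exact absurd rfl hj
    · exact ih hj
    · exact absurd rfl hj
    · exact dvd_add (dvd_add (ih hj) (ih hj)) (X_dvd_twistedDeriv _ _)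

end NormalOrdering

section Derivations

open Polynomial

variable {R : Type*} [CommRing R] [Algebra ℚ R]

lemma Derivation.map_pow_of_eq_mul (δ : Derivation ℚ R R) {u L : R} (hL : δ L = u * L)
    (e : ℕ) : δ (L ^ e) = e * u * L ^ e := by
  induction e with
  | zero => simp
  | succ e ih =>
    rw [pow_succ, Derivation.leibniz, ih, hL, smul_eq_mul, smul_eq_mul]
    push_cast
    ring

lemma Derivation.map_pow_mul_aeval (δ : Derivation ℚ R R) {κ : ℚ} {L x : R}
    (hL : δ L = algebraMap ℚ R κ * x * L) (hx : δ x = x * (1 - x)) (e : ℕ) (c : ℚ[X]) :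
    δ (L ^ e * aeval x c) = L ^ e * aeval x (twistedDeriv (e * κ) c) := by
  rw [Derivation.leibniz, δ.map_pow_of_eq_mul (by rw [hL, mul_assoc]) e, Derivation.map_aeval,
    hx, twistedDeriv]
  simp only [smul_eq_mul, map_add, map_mul, map_sub, map_one, aeval_C, aeval_X,
    _root_.map_natCast]
  ring

end Derivations

section OrderedMonomial

variable {R A : Type*} [CommRing R] [Ring A]

def orderedMonomial (μ : R →+* A) (z d : A) (f : R) (m k : ℕ) : A := z ^ m * μ f * d ^ k

variable (μ : R →+* A) (z d : A)

lemma orderedMonomial_add (f g : R) (m k : ℕ) :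
    orderedMonomial μ z d (f + g) m k =
      orderedMonomial μ z d f m k + orderedMonomial μ z d g m k := by
  simp [orderedMonomial, mul_add, add_mul]

@[simp]
lemma orderedMonomial_zero (m k : ℕ) : orderedMonomial μ z d 0 m k = 0 := by
  simp [orderedMonomial]

lemma mul_orderedMonomial (δ : R → R) {L : R} (hzL : Commute z (μ L))
    (hzd : Commute z d) (hd : ∀ f, d * μ f = μ f * d + μ (δ f)) (f : R) (m k : ℕ) :
    (z * d + μ L) * orderedMonomial μ z d f m k =
      orderedMonomial μ z d f (m + 1) (k + 1) + orderedMonomial μ z d (δ f) (m + 1) k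
        + orderedMonomial μ z d (L * f) m k := by
  have h1 : d * z ^ m = z ^ m * d := (hzd.pow_left m).eq.symm
  have h2 : μ L * z ^ m = z ^ m * μ L := (hzL.pow_left m).eq.symm
  simp only [orderedMonomial, pow_succ', map_mul]
  calc (z * d + μ L) * (z ^ m * μ f * d ^ k)
      = z * (d * z ^ m) * μ f * d ^ k + μ L * z ^ m * μ f * d ^ k := by noncomm_ring
    _ = z * z ^ m * (d * μ f) * d ^ k + z ^ m * (μ L * μ f) * d ^ k := by
        rw [h1, h2]; noncomm_ring
    _ = _ := by rw [hd]; noncomm_ring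

end OrderedMonomial

lemma sum_range_succ_triangle {M : Type*} [AddCommMonoid M] (F : ℕ → ℕ → M) (n : ℕ) :
    ∑ m ∈ range (n + 2), ∑ j ∈ range (m + 1), F m j =
      ∑ m ∈ range (n + 1), (∑ j ∈ range (m + 1), F (m + 1) (j + 1) + F (m + 1) 0)
        + F 0 0 := by
  rw [sum_range_succ', sum_range_one]
  exact congrArg (· + F 0 0) (sum_congr rfl fun m _ => sum_range_succ' _ _)

section NormalOrderedSum

open Polynomial

variable {R A : Type*} [CommRing R] [Algebra ℚ R] [Ring A] (μ : R →+* A) (z d : A)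

def normalOrderedSum (κ : ℚ) (L x : R) (n : ℕ) : A :=
  ∑ m ∈ range (n + 1), ∑ j ∈ range (m + 1),
    orderedMonomial μ z d (L ^ (n - m) * aeval x (normalOrderCoeff κ n m j)) m (m - j)

variable {κ : ℚ} {L x : R}

-- This and the next lemma put the `L`-part and the `z * d * d ^ k`-part of
-- `(z * d + μ L) * normalOrderedSum n` into the row shape of `normalOrderedSum (n + 1)`
-- produced by `sum_range_succ_triangle`.
lemma sum_orderedMonomial_mul_left (n : ℕ) :
    ∑ m ∈ range (n + 1), ∑ j ∈ range (m + 1),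
      orderedMonomial μ z d (L * (L ^ (n - m) * aeval x (normalOrderCoeff κ n m j))) m (m - j) =
    ∑ m ∈ range (n + 1), (∑ j ∈ range (m + 1),
      orderedMonomial μ z d (L ^ (n - m) * aeval x (normalOrderCoeff κ n (m + 1) (j + 1)))
        (m + 1) (m - j) +
      orderedMonomial μ z d (L ^ (n - m) * aeval x (normalOrderCoeff κ n (m + 1) 0))
        (m + 1) (m + 1))
    + orderedMonomial μ z d (L ^ (n + 1) * aeval x (normalOrderCoeff κ n 0 0)) 0 0 := by
  calc _ = ∑ m ∈ range (n + 2), ∑ j ∈ range (m + 1),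
        orderedMonomial μ z d (L ^ (n + 1 - m) * aeval x (normalOrderCoeff κ n m j))
          m (m - j) := by
        rw [sum_range_succ _ (n + 1)]
        simp only [normalOrderCoeff_eq_zero_of_lt (Nat.lt_succ_self n), map_zero, mul_zero,
          orderedMonomial_zero, sum_const_zero, add_zero]
        refine sum_congr rfl fun m hm => sum_congr rfl fun j _ => ?_
        rw [← mul_assoc, ← pow_succ', Nat.sub_add_comm (by simpa [Nat.lt_succ_iff] using hm)]
    _ = _ := by
        rw [sum_range_succ_triangle]
        simp only [Nat.add_sub_add_right, Nat.sub_zero]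

lemma sum_orderedMonomial_succ_succ (n : ℕ) :
    ∑ m ∈ range (n + 1), ∑ j ∈ range (m + 1),
      orderedMonomial μ z d (L ^ (n - m) * aeval x (normalOrderCoeff κ n m j))
        (m + 1) (m - j + 1) =
    ∑ m ∈ range (n + 1), (∑ j ∈ range (m + 1),
      orderedMonomial μ z d (L ^ (n - m) * aeval x (normalOrderCoeff κ n m (j + 1)))
        (m + 1) (m - j) +
      orderedMonomial μ z d (L ^ (n - m) * aeval x (normalOrderCoeff κ n m 0))
        (m + 1) (m + 1)) := by
  refine sum_congr rfl fun m _ => ?_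
  calc _ = ∑ j ∈ range (m + 2),
        orderedMonomial μ z d (L ^ (n - m) * aeval x (normalOrderCoeff κ n m j))
          (m + 1) (m + 1 - j) := by
        rw [sum_range_succ _ (m + 1), normalOrderCoeff_eq_zero_of_lt_right (Nat.lt_succ_self m),
          map_zero, mul_zero, orderedMonomial_zero, add_zero]
        refine sum_congr rfl fun j hj => ?_
        rw [Nat.sub_add_comm (by simpa [Nat.lt_succ_iff] using hj)]
    _ = _ := by
        rw [sum_range_succ']
        simp only [Nat.add_sub_add_right, Nat.sub_zero]

lemma mul_normalOrderedSum (δ : Derivation ℚ R R) (hzL : Commute z (μ L)) (hzd : Commute z d)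
    (hd : ∀ f, d * μ f = μ f * d + μ (δ f)) (hL : δ L = algebraMap ℚ R κ * x * L)
    (hx : δ x = x * (1 - x)) (n : ℕ) :
    (z * d + μ L) * normalOrderedSum μ z d κ L x n = normalOrderedSum μ z d κ L x (n + 1) := by
  rw [normalOrderedSum, normalOrderedSum, sum_range_succ_triangle]
  simp only [mul_sum, mul_orderedMonomial μ z d δ hzL hzd hd, δ.map_pow_mul_aeval hL hx,
    sum_add_distrib, sum_orderedMonomial_mul_left, sum_orderedMonomial_succ_succ]
  simp only [normalOrderCoeff, Nat.add_sub_add_right, Nat.sub_zero, map_add, mul_add,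
    orderedMonomial_add, sum_add_distrib]
  abel

theorem pow_eq_normalOrderedSum (δ : Derivation ℚ R R) (hzL : Commute z (μ L))
    (hzd : Commute z d) (hd : ∀ f, d * μ f = μ f * d + μ (δ f))
    (hL : δ L = algebraMap ℚ R κ * x * L) (hx : δ x = x * (1 - x)) (n : ℕ) :
    (z * d + μ L) ^ n = normalOrderedSum μ z d κ L x n := by
  induction n with
  | zero => simp [normalOrderedSum, normalOrderCoeff, orderedMonomial]
  | succ n ih => rw [pow_succ', ih, mul_normalOrderedSum μ z d δ hzL hzd hd hL hx]

end NormalOrderedSum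

def qDeriv : Derivation ℚ ℚ⟦X⟧ ℚ⟦X⟧ := (X : ℚ⟦X⟧) • derivative ℚ

@[simp]
lemma coeff_qDeriv (n : ℕ) (f : ℚ⟦X⟧) : coeff n (qDeriv f) = n * coeff n f := by
  rcases n with _ | n
  · simp [qDeriv]
  · simp [qDeriv, coeff_succ_X_mul, coeff_derivative, mul_comm]

@[simp]
lemma constantCoeff_qDeriv (f : ℚ⟦X⟧) : constantCoeff (qDeriv f) = 0 := by
  rw [← coeff_zero_eq_constantCoeff_apply, coeff_qDeriv]; simp

lemma Dq_eq_qDeriv : Dq = ⇑qDeriv := by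
  funext f; ext n; simp [Dq]

lemma gbinom_succ (a : ℚ) (n : ℕ) :
    (n + 1) * gbinom a (n + 1) = (a - n) * gbinom a n := by
  simp only [gbinom, prod_range_succ, Nat.factorial_succ]
  field_simp
  push_cast
  ring

lemma gbinom_neg_one (n : ℕ) : gbinom (-1) n = (-1) ^ n := by
  induction n with
  | zero => simp [gbinom]
  | succ k ih =>
    have h := gbinom_succ (-1) k
    rw [ih] at h
    exact mul_left_cancel₀ (by positivity : (k : ℚ) + 1 ≠ 0) (by rw [h]; ring)

@[simp]
lemma coeff_Lpow (N : ℕ) (r s : ℚ) (n : ℕ) :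
    coeff n (Lpow N r s) = gbinom (s / N) n * r ^ n := by
  simp [Lpow]

@[simp]
lemma constantCoeff_Lpow (N : ℕ) (r s : ℚ) : constantCoeff (Lpow N r s) = 1 := by
  rw [← coeff_zero_eq_constantCoeff_apply, coeff_Lpow]; simp [gbinom]

lemma coeff_Lpow_neg (N : ℕ) (hN : N ≠ 0) (r : ℚ) (n : ℕ) :
    coeff n (Lpow N r (-N)) = (-r) ^ n := by
  rw [coeff_Lpow, neg_div, div_self (by exact_mod_cast hN), gbinom_neg_one]
  ring

lemma one_add_mul_qDeriv_Lpow (N : ℕ) (r s : ℚ) :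
    (1 + C r * X) * qDeriv (Lpow N r s) = C (s / N * r) * X * Lpow N r s := by
  ext n
  rcases n with _ | n
  · simp
  · rw [add_mul, one_mul, mul_assoc, mul_assoc, map_add, coeff_C_mul, coeff_C_mul,
      coeff_succ_X_mul, coeff_succ_X_mul, coeff_qDeriv, coeff_qDeriv, coeff_Lpow, coeff_Lpow]
    push_cast
    linear_combination r ^ (n + 1) * gbinom_succ (s / N) n

lemma one_add_mul_Lpow_neg (N : ℕ) (hN : N ≠ 0) (r : ℚ) :
    (1 + C r * X) * Lpow N r (-N) = 1 := by
  ext n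
  rcases n with _ | n
  · simp
  · rw [add_mul, one_mul, mul_assoc, map_add, coeff_C_mul, coeff_succ_X_mul,
      coeff_Lpow_neg N hN, coeff_Lpow_neg N hN, coeff_one, if_neg n.succ_ne_zero]
    ring

lemma Xser_eq (N : ℕ) (hN : N ≠ 0) (r : ℚ) : Xser N r = C r * X * Lpow N r (-N) := by
  rw [Xser, ← one_add_mul_Lpow_neg N hN r]
  ring

lemma qDeriv_Lpow (N : ℕ) (hN : N ≠ 0) (r s : ℚ) :
    qDeriv (Lpow N r s) = C (s / N) * Xser N r * Lpow N r s :=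
  calc qDeriv (Lpow N r s)
      = (1 + C r * X) * Lpow N r (-N) * qDeriv (Lpow N r s) := by
        rw [one_add_mul_Lpow_neg N hN, one_mul]
    _ = Lpow N r (-N) * (C (s / N * r) * X * Lpow N r s) := by
        rw [← one_add_mul_qDeriv_Lpow]; ring
    _ = C (s / N) * Xser N r * Lpow N r s := by
        rw [Xser_eq N hN, map_mul]; ring

lemma qDeriv_Xser (N : ℕ) (hN : N ≠ 0) (r : ℚ) :
    qDeriv (Xser N r) = Xser N r * (1 - Xser N r) :=
  calc qDeriv (Xser N r)
      = -qDeriv (Lpow N r (-N)) := by rw [Xser, map_sub, Derivation.map_one_eq_zero, zero_sub]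
    _ = Xser N r * Lpow N r (-N) := by
        rw [qDeriv_Lpow N hN, neg_div, div_self (by exact_mod_cast hN), map_neg, map_one]
        ring
    _ = Xser N r * (1 - Xser N r) := by rw [Xser]; ring

section OperatorsOnSeriesPolynomials

open Polynomial

lemma coeff_Dz (p : Polynomial ℚ⟦X⟧) (k : ℕ) : (Dz p).coeff k = qDeriv (p.coeff k) := by
  rw [Dz, Polynomial.sum_def, finsetSum_coeff]
  simp only [Polynomial.coeff_monomial, sum_ite_eq', Dq_eq_qDeriv]
  split_ifs with h
  · rfl
  · rw [notMem_support_iff.mp h, map_zero]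

def DzLinear : Module.End ℚ (Polynomial ℚ⟦X⟧) where
  toFun := Dz
  map_add' p q := by ext k; simp [coeff_Dz]
  map_smul' a p := by ext k; simp [coeff_Dz]

def mulZ : Module.End ℚ (Polynomial ℚ⟦X⟧) := Algebra.lmul ℚ _ Polynomial.X

def mulC : ℚ⟦X⟧ →+* Module.End ℚ (Polynomial ℚ⟦X⟧) :=
  (Algebra.lmul ℚ (Polynomial ℚ⟦X⟧)).toRingHom.comp Polynomial.C

@[simp] lemma DzLinear_apply (p : Polynomial ℚ⟦X⟧) : DzLinear p = Dz p := rfl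

@[simp] lemma DzLinear_pow_apply (k : ℕ) (p : Polynomial ℚ⟦X⟧) :
    (DzLinear ^ k) p = Dz^[k] p :=
  Module.End.pow_apply _ _ _

@[simp] lemma mulZ_apply (p : Polynomial ℚ⟦X⟧) : mulZ p = Polynomial.X * p := rfl

@[simp] lemma mulZ_pow_apply (m : ℕ) (p : Polynomial ℚ⟦X⟧) :
    (mulZ ^ m) p = Polynomial.X ^ m * p := by
  rw [mulZ, ← map_pow]; rfl

@[simp] lemma mulC_apply (f : ℚ⟦X⟧) (p : Polynomial ℚ⟦X⟧) :
    mulC f p = Polynomial.C f * p := rfl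

lemma commute_mulZ_mulC (f : ℚ⟦X⟧) : Commute mulZ (mulC f) :=
  (Commute.all _ _).map (Algebra.lmul ℚ _)

lemma commute_mulZ_DzLinear : Commute mulZ DzLinear := by
  refine LinearMap.ext fun p => Polynomial.ext fun k => ?_
  rcases k with _ | k
  · simp [coeff_Dz]
  · simp [coeff_Dz, coeff_X_mul]

lemma DzLinear_mul_mulC (f : ℚ⟦X⟧) :
    DzLinear * mulC f = mulC f * DzLinear + mulC (qDeriv f) := by
  refine LinearMap.ext fun p => Polynomial.ext fun k => ?_
  simp [coeff_Dz, add_comm, mul_comm]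

lemma DL_eq (N : ℕ) (r : ℚ) : DL N r = ⇑(mulZ * DzLinear + mulC (Lpow N r 1)) := rfl

end OperatorsOnSeriesPolynomials

lemma iterate_DL_eq (N : ℕ) (hN : N ≠ 0) (r : ℚ) (n : ℕ) :
    (DL N r)^[n] =
      ⇑(normalOrderedSum mulC mulZ DzLinear (1 / N) (Lpow N r 1) (Xser N r) n) := by
  have hL : qDeriv (Lpow N r 1) = algebraMap ℚ ℚ⟦X⟧ (1 / N) * Xser N r * Lpow N r 1 := by
    rw [qDeriv_Lpow N hN]; rfl
  rw [DL_eq, ← Module.End.coe_pow, pow_eq_normalOrderedSum mulC mulZ DzLinear qDeriv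
    (commute_mulZ_mulC _) commute_mulZ_DzLinear DzLinear_mul_mulC hL (qDeriv_Xser N hN r)]

theorem statement16_general (N : ℕ) (hN : 1 ≤ N) (r : ℚ) (n : ℕ) :
    ∃ c : ℕ → ℕ → Polynomial ℚ,
      (∀ m : ℕ, m ≤ n → c m 0 = Polynomial.C ((n.choose m : ℕ) : ℚ)) ∧
      (∀ m j : ℕ, m ≤ n → 1 ≤ j → j ≤ m →
        Polynomial.X ∣ c m j ∧ (c m j).natDegree ≤ j) ∧
      ∀ p : Polynomial (PowerSeries ℚ),
        (DL N r)^[n] p =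
          ∑ m ∈ range (n + 1),
            Polynomial.X ^ m * Polynomial.C ((Lpow N r 1) ^ (n - m)) *
              ∑ j ∈ range (m + 1),
                Polynomial.C (Polynomial.aeval (Xser N r) (c m j)) * Dz^[m - j] p := by
  refine ⟨normalOrderCoeff (1 / N) n, fun m _ => normalOrderCoeff_zero_right n m,
    fun m j _ hj _ => ⟨X_dvd_normalOrderCoeff (by omega), natDegree_normalOrderCoeff_le n m j⟩,
    fun p => ?_⟩
  rw [iterate_DL_eq N (by omega) r n, normalOrderedSum]
  simp only [orderedMonomial, LinearMap.sum_apply, Module.End.mul_apply,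
    mulZ_pow_apply, DzLinear_pow_apply, mulC_apply, map_mul, mul_sum, mul_assoc]

theorem statement16 (N : ℕ) (hN : 1 ≤ N) (r : ℚ) (hr : r ≠ 0) (n : ℕ) :
    ∃ c : ℕ → ℕ → Polynomial ℚ,
      (∀ m : ℕ, m ≤ n → c m 0 = Polynomial.C ((n.choose m : ℕ) : ℚ)) ∧
      (∀ m j : ℕ, m ≤ n → 1 ≤ j → j ≤ m →
        Polynomial.X ∣ c m j ∧ (c m j).natDegree ≤ j) ∧
      ∀ p : Polynomial (PowerSeries ℚ),
        (DL N r)^[n] p =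
          ∑ m ∈ range (n + 1),
            Polynomial.X ^ m * Polynomial.C ((Lpow N r 1) ^ (n - m)) *
              ∑ j ∈ range (m + 1),
                Polynomial.C (Polynomial.aeval (Xser N r) (c m j)) * Dz^[m - j] p :=
  statement16_general N hN r n

end
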